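/- arXiv:1209.5352 — 2 statements merged into one kernel-verified Lean document; each statement's English description precedes it below -/
import Mathlib

section
/- Let V be a finite-dimensional vector space over a field k, σ a permutation of {1,...,n} acting on V^{⊗n} by permuting tensor factors, and g_1,...,g_n ∈ End(V). Then Tr_{V^{⊗n}}(σ ∘ (g_1 ⊗ ... ⊗ g_n)) = Π_{(i_1,...,i_k) \text{ cycle of } σ} Tr_V(g_{i_k} ⋯ g_{i_1}), the product being over the cycles of σ (with the indices of each cycle listed in cyclic order). -/
open scoped TensorProduct


/-- The set of minimal representatives of the cycles (orbits) of a permutation `σ`: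
those `j` that are minimal in their `σ`-orbit.  Fixed points count as cycles of length 1. -/
def cycleReps {n : ℕ} (σ : Equiv.Perm (Fin n)) : Finset (Fin n) :=
  Finset.univ.filter fun j => ∀ x : Fin n, σ.SameCycle j x → j ≤ x

/-- The product of `g` along the cycle `(i_1, …, i_k)` of `σ` through `j`, listed in cyclic
order `i_1 = j, i_2 = σ(j), …, i_k = σ^{k-1}(j)`: the ordered product `g_{i_k} ⋯ g_{i_1}`.
Here `k = orderOf (σ.cycleOf j)` is the length of the cycle of `σ` containing `j`
(equal to `1` for a fixed point). -/
noncomputable def cycleProd {n : ℕ} {M : Type*} [Monoid M] (σ : Equiv.Perm (Fin n))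
    (g : Fin n → M) (j : Fin n) : M :=
  (((List.range (orderOf (σ.cycleOf j))).reverse).map fun t => g ((σ ^ t) j)).prod


/-- The action of a permutation `σ` of `{1,…,n}` on the `n`-th tensor power `V^{⊗n}`,
permuting the tensor factors: `v_1 ⊗ ⋯ ⊗ v_n ↦ v_{σ⁻¹(1)} ⊗ ⋯ ⊗ v_{σ⁻¹(n)}`. -/
noncomputable def permAction (k : Type*) [Field k] (V : Type*) [AddCommGroup V] [Module k V]
    (n : ℕ) (σ : Equiv.Perm (Fin n)) : Module.End k (⨂[k] (_ : Fin n), V) :=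
  PiTensorProduct.lift ((PiTensorProduct.tprod k).domDomCongr σ⁻¹)

/-!
In the basis `b^{⊗n}` of `V^{⊗n}`, the diagonal entry of `σ ∘ (g_1 ⊗ ⋯ ⊗ g_n)` at a multi-index
`f` is `∏ i, (g_i)_{f(σ i), f(i)}`, so the trace is the sum of these products over all `f`.
Parametrising each cycle of `σ` as `j, σ j, …, σ^{k-1} j` from its minimal element `j` factorises
that sum into one sum per cycle, and the sum attached to a cycle is the expansion of
`Tr(g_{i_k} ⋯ g_{i_1})` as a sum over closed walks of length `k`.
-/

theorem Equiv.Perm.pow_apply_eq_pow_apply_iff_modEq {α : Type*} [Fintype α] [DecidableEq α]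
    (σ : Equiv.Perm α) (x : α) {s t : ℕ} :
    (σ ^ s) x = (σ ^ t) x ↔ s ≡ t [MOD orderOf (σ.cycleOf x)] := by
  by_cases hx : σ x = x
  · simp [(σ.cycleOf_eq_one_iff).mpr hx, Nat.modEq_one, pow_apply_eq_self_of_apply_eq_self hx]
  · rw [(σ.isCycle_cycleOf hx).orderOf, (σ.isCycleOn_support_cycleOf x).pow_apply_eq_pow_apply
      ((σ.mem_support_cycleOf_iff' hx).mpr (.refl σ x))]

theorem exists_mem_cycleReps_sameCycle {n : ℕ} (σ : Equiv.Perm (Fin n)) (i : Fin n) :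
    ∃ j ∈ cycleReps σ, σ.SameCycle j i := by
  obtain ⟨j, hj, hmin⟩ := (Finset.univ.filter (σ.SameCycle · i)).exists_min_image id
    ⟨i, by simp [Equiv.Perm.SameCycle.refl]⟩
  simp only [Finset.mem_filter, Finset.mem_univ, true_and, id] at hj hmin
  exact ⟨j, by simpa [cycleReps] using fun x hx => hmin x (hx.symm.trans hj), hj⟩

theorem eq_of_mem_cycleReps_of_sameCycle {n : ℕ} {σ : Equiv.Perm (Fin n)} {j j' : Fin n}
    (hj : j ∈ cycleReps σ) (hj' : j' ∈ cycleReps σ) (h : σ.SameCycle j j') : j = j' := by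
  simp only [cycleReps, Finset.mem_filter, Finset.mem_univ, true_and] at hj hj'
  exact le_antisymm (hj j' h) (hj' j h.symm)

noncomputable def cycleRepsSigmaEquiv {n : ℕ} (σ : Equiv.Perm (Fin n)) :
    (Σ j : cycleReps σ, Fin (orderOf (σ.cycleOf j))) ≃ Fin n :=
  Equiv.ofBijective (fun p => (σ ^ (p.2 : ℕ)) p.1) <| by
    constructor
    · rintro ⟨⟨j, hj⟩, t⟩ ⟨⟨j', hj'⟩, t'⟩ h
      dsimp only at h
      obtain rfl : j = j' := eq_of_mem_cycleReps_of_sameCycle hj hj' <| by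
        have : σ.SameCycle ((σ ^ (t : ℕ)) j) ((σ ^ (t' : ℕ)) j') := h ▸ .refl _ _
        simpa only [Equiv.Perm.sameCycle_pow_left, Equiv.Perm.sameCycle_pow_right] using this
      obtain rfl : t = t' := Fin.ext <|
        ((σ.pow_apply_eq_pow_apply_iff_modEq j).mp h).eq_of_lt_of_lt t.2 t'.2
      rfl
    · intro i
      obtain ⟨j, hj, hji⟩ := exists_mem_cycleReps_sameCycle σ i
      obtain ⟨t, -, rfl⟩ := hji.exists_pow_eq'
      exact ⟨⟨⟨j, hj⟩, ⟨t % _, Nat.mod_lt _ (orderOf_pos _)⟩⟩, σ.pow_mod_orderOf_cycleOf_apply t j⟩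

theorem cycleRepsSigmaEquiv_apply {n : ℕ} (σ : Equiv.Perm (Fin n)) (j : cycleReps σ)
    (t : Fin (orderOf (σ.cycleOf j))) : cycleRepsSigmaEquiv σ ⟨j, t⟩ = (σ ^ (t : ℕ)) j :=
  rfl

theorem apply_cycleRepsSigmaEquiv {n : ℕ} (σ : Equiv.Perm (Fin n)) (j : cycleReps σ)
    (t : Fin (orderOf (σ.cycleOf j))) :
    σ (cycleRepsSigmaEquiv σ ⟨j, t⟩) = cycleRepsSigmaEquiv σ ⟨j, finRotate _ t⟩ := by
  have := t.neZero
  simp only [cycleRepsSigmaEquiv_apply, finRotate_apply, Fin.val_add, Fin.val_one',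
    Nat.add_mod_mod, σ.pow_mod_orderOf_cycleOf_apply, pow_succ', Equiv.Perm.mul_apply]

theorem sum_prod_eq_prod_cycleReps {R ι : Type*} [CommSemiring R] [Fintype ι] {n : ℕ}
    (σ : Equiv.Perm (Fin n)) (F : Fin n → ι → ι → R) :
    ∑ f : Fin n → ι, ∏ i, F i (f (σ i)) (f i) =
      ∏ j ∈ cycleReps σ, ∑ x : Fin (orderOf (σ.cycleOf j)) → ι,
        ∏ t : Fin (orderOf (σ.cycleOf j)), F ((σ ^ (t : ℕ)) j) (x (finRotate _ t)) (x t) := by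
  calc ∑ f : Fin n → ι, ∏ i, F i (f (σ i)) (f i)
      = ∑ f : (Σ j : cycleReps σ, Fin (orderOf (σ.cycleOf j))) → ι,
          ∏ j, ∏ t, F (cycleRepsSigmaEquiv σ ⟨j, t⟩) (f ⟨j, finRotate _ t⟩) (f ⟨j, t⟩) := by
        refine Fintype.sum_equiv ((cycleRepsSigmaEquiv σ).arrowCongr (.refl ι)).symm _ _
          fun f => ?_
        rw [← (cycleRepsSigmaEquiv σ).prod_comp, Fintype.prod_sigma]
        refine Finset.prod_congr rfl fun j _ => Finset.prod_congr rfl fun t _ => ?_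
        rw [apply_cycleRepsSigmaEquiv]
        rfl
    _ = ∏ j : cycleReps σ, ∑ x : Fin (orderOf (σ.cycleOf j)) → ι,
          ∏ t : Fin (orderOf (σ.cycleOf j)), F ((σ ^ (t : ℕ)) j) (x (finRotate _ t)) (x t) := by
        rw [Finset.prod_univ_sum, Fintype.piFinset_univ]
        exact Fintype.sum_equiv (Equiv.piCurry fun _ _ => ι) _ _ fun f => rfl
    _ = _ := Finset.prod_coe_sort (cycleReps σ) fun j => ∑ x : Fin (orderOf (σ.cycleOf j)) → ι,
          ∏ t : Fin (orderOf (σ.cycleOf j)), F ((σ ^ (t : ℕ)) j) (x (finRotate _ t)) (x t)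

namespace Matrix

variable {ι R : Type*} [Fintype ι] [DecidableEq ι] [CommSemiring R]

/-- Generalising over `N` lets the cyclicity of the trace move each new factor `M m` into `N`. -/
theorem trace_prod_range_reverse_mul (M : ℕ → Matrix ι ι R) (m : ℕ) (N : Matrix ι ι R) :
    trace (((List.range m).reverse.map M).prod * N) =
      ∑ x : Fin (m + 1) → ι, N (x 0) (x (Fin.last m)) *
        ∏ t : Fin m, M t (x t.succ) (x t.castSucc) := by
  induction m generalizing N with
  | zero =>
    simp only [List.range_zero, List.reverse_nil, List.map_nil, List.prod_nil, Matrix.one_mul,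
      Finset.univ_eq_empty, Finset.prod_empty, mul_one]
    exact (Equiv.funUnique (Fin 1) ι).symm.sum_comp fun x => N (x 0) (x (Fin.last 0))
  | succ m ih =>
    rw [List.range_succ, List.reverse_append, List.map_append, List.prod_append]
    simp only [List.reverse_singleton, List.map_cons, List.map_nil, List.prod_singleton]
    rw [Matrix.mul_assoc, trace_mul_comm, Matrix.mul_assoc, ih,
      ← (Fin.snocEquiv fun _ : Fin (m + 1 + 1) => ι).sum_comp, Fintype.sum_prod_type,
      Finset.sum_comm]
    refine Finset.sum_congr rfl fun x _ => ?_
    rw [Matrix.mul_apply, Finset.sum_mul]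
    refine Finset.sum_congr rfl fun c _ => ?_
    simp only [Fin.snocEquiv_apply, Fin.prod_univ_castSucc, Fin.succ_last, Fin.snoc_last,
      Fin.succ_castSucc, Fin.snoc_castSucc, Fin.val_castSucc, Fin.val_last]
    rw [← Fin.castSucc_zero' (n := m + 1), Fin.snoc_castSucc]
    ring

theorem trace_prod_range_reverse (M : ℕ → Matrix ι ι R) {m : ℕ} (hm : 0 < m) :
    trace ((List.range m).reverse.map M).prod =
      ∑ x : Fin m → ι, ∏ t : Fin m, M t (x (finRotate m t)) (x t) := by
  obtain ⟨p, rfl⟩ := Nat.exists_eq_add_one.mpr hm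
  rw [List.range_succ, List.reverse_append, List.map_append, List.prod_append]
  simp only [List.reverse_singleton, List.map_cons, List.map_nil, List.prod_singleton]
  rw [trace_mul_comm, trace_prod_range_reverse_mul]
  refine Finset.sum_congr rfl fun x _ => ?_
  have hrot (t : Fin p) : finRotate (p + 1) t.castSucc = t.succ := by simp
  simp only [Fin.prod_univ_castSucc, hrot, finRotate_last, Fin.val_castSucc, Fin.val_last]
  ring

end Matrix

theorem LinearMap.trace_prod_range_reverse {R M ι : Type*} [CommSemiring R] [AddCommMonoid M]
    [Module R M] [Fintype ι] [DecidableEq ι] (b : Module.Basis ι R M) (h : ℕ → Module.End R M)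
    {m : ℕ} (hm : 0 < m) :
    LinearMap.trace R M ((List.range m).reverse.map h).prod =
      ∑ x : Fin m → ι, ∏ t : Fin m, LinearMap.toMatrix b b (h t) (x (finRotate m t)) (x t) := by
  rw [LinearMap.trace_eq_matrix_trace R b]
  change Matrix.trace (LinearMap.toMatrixAlgEquiv b _) = _
  rw [map_list_prod, List.map_map]
  exact Matrix.trace_prod_range_reverse _ hm

theorem permAction_tprod {k V : Type*} [Field k] [AddCommGroup V] [Module k V] {n : ℕ}
    (σ : Equiv.Perm (Fin n)) (v : Fin n → V) :
    permAction k V n σ (PiTensorProduct.tprod k v) =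
      PiTensorProduct.tprod k fun i => v (σ⁻¹ i) := by
  rw [permAction, PiTensorProduct.lift.tprod]
  rfl

open PiTensorProduct in
theorem trace_permAction_comp_map {k V ι : Type*} [Field k] [AddCommGroup V] [Module k V]
    [Fintype ι] [DecidableEq ι] (b : Module.Basis ι k V) {n : ℕ} (σ : Equiv.Perm (Fin n))
    (g : Fin n → Module.End k V) :
    LinearMap.trace k _ (permAction k V n σ ∘ₗ PiTensorProduct.map g) =
      ∑ f : Fin n → ι, ∏ i, LinearMap.toMatrix b b (g i) (f (σ i)) (f i) := by
  rw [LinearMap.trace_eq_matrix_trace k (Basis.piTensorProduct fun _ => b), Matrix.trace]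
  refine Finset.sum_congr rfl fun f _ => ?_
  rw [Matrix.diag_apply, LinearMap.toMatrix_apply, Basis.piTensorProduct_apply,
    LinearMap.comp_apply, map_tprod, permAction_tprod, Basis.piTensorProduct_repr_tprod_apply,
    ← Equiv.prod_comp σ]
  simp only [Equiv.Perm.coe_inv, Equiv.symm_apply_apply, LinearMap.toMatrix_apply]

/-- Let `V` be a finite-dimensional vector space over a field `k`, `σ` a
permutation of `{1,…,n}` acting on `V^{⊗n}` by permuting the tensor factors, and
`g_1, …, g_n ∈ End(V)`.  Then
`Tr_{V^{⊗n}}(σ ∘ (g_1 ⊗ ⋯ ⊗ g_n)) = Π_{(i_1,…,i_k) cycle of σ} Tr_V(g_{i_k} ⋯ g_{i_1})`,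
the product being over the cycles of `σ` (with the indices of each cycle listed in cyclic
order); the product runs over the minimal representatives `j` of the orbits of `σ`. -/
theorem stmt_8 (k : Type*) [Field k] (V : Type*) [AddCommGroup V] [Module k V]
    [FiniteDimensional k V] (n : ℕ) (σ : Equiv.Perm (Fin n)) (g : Fin n → Module.End k V) :
    LinearMap.trace k (⨂[k] (_ : Fin n), V)
        (permAction k V n σ ∘ₗ PiTensorProduct.map fun i => g i)
      = ∏ j ∈ cycleReps σ, LinearMap.trace k V (cycleProd σ g j) := by
  let b := Module.finBasis k V
  rw [trace_permAction_comp_map b,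
    sum_prod_eq_prod_cycleReps σ fun i => LinearMap.toMatrix b b (g i)]
  refine Finset.prod_congr rfl fun j _ => ?_
  rw [cycleProd, LinearMap.trace_prod_range_reverse b _ (orderOf_pos _)]
end

section
/- Let W, Z, T be schemes of finite type over a finite field F_q, with Z smooth over F_q. Let h = (h_1, h_2) : W → Z × T be an étale morphism and f : W → Z an arbitrary morphism over F_q. Define U to be the closed subscheme (equalizer) of W given by U = {w ∈ W : h_1(w) = Frob_Z(f(w))}, where Frob_Z is the q-power absolute Frobenius of Z. Then the restriction h_2 : U → T is étale. -/
open TensorProduct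

/-!
Étaleness of `U → T` is checked by infinitesimal lifting. Over an `F_q`-algebra `R` with a
square-zero ideal `J`, the `q`-power map kills `J` (as `q ≥ 2`), so it factors through `R ⧸ J`.
Hence for an `R ⧸ J`-point `g` of `U`, the point `Frob_Z ∘ f ∘ g` of `Z` has a canonical lift
to `R`; together with `A → R` it makes `R` a `C ⊗ A`-algebra. The lifts of `g` to `U` are then
exactly the `C ⊗ A`-linear lifts of `g` to `W`, which exist uniquely because `h` is étale.
-/

namespace FiniteField

variable {F R : Type*} [Field F] [Fintype F] [CommRing R] [Algebra F R] {J : Ideal R}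

variable (F) in
def frobeniusQuotientLift (hJ : J ^ 2 = ⊥) : R ⧸ J →ₐ[F] R :=
  Ideal.Quotient.liftₐ J (frobeniusAlgHom F R) fun _ ↦
    Ideal.pow_eq_zero_of_mem (hJ.trans Ideal.zero_eq_bot.symm) Fintype.one_lt_card

@[simp]
lemma frobeniusQuotientLift_mk (hJ : J ^ 2 = ⊥) (x : R) :
    frobeniusQuotientLift F hJ (Ideal.Quotient.mk J x) = x ^ Fintype.card F := rfl

lemma mk_frobeniusQuotientLift (hJ : J ^ 2 = ⊥) (y : R ⧸ J) :
    Ideal.Quotient.mk J (frobeniusQuotientLift F hJ y) = y ^ Fintype.card F := by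
  obtain ⟨x, rfl⟩ := Ideal.Quotient.mk_surjective y
  rw [frobeniusQuotientLift_mk, map_pow]

end FiniteField

theorem RingHom.FormallyEtale.existsUnique_lift {P B R : Type*} [CommRing P] [CommRing B]
    [CommRing R] {φ : P →+* B} (hφ : φ.FormallyEtale) {J : Ideal R} (hJ : J ^ 2 = ⊥)
    (ψ : P →+* R) (g : B →+* R ⧸ J) (hg : g.comp φ = (Ideal.Quotient.mk J).comp ψ) :
    ∃! g' : B →+* R, g'.comp φ = ψ ∧ (Ideal.Quotient.mk J).comp g' = g := by
  algebraize [φ, ψ]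
  let gₐ : B →ₐ[P] R ⧸ J := { g with commutes' := fun p ↦ congr($hg p) }
  obtain ⟨g', hg'⟩ := Algebra.FormallySmooth.comp_surjective P B J hJ gₐ
  refine ⟨g'.toRingHom, ⟨RingHom.ext g'.commutes, congr(($hg').toRingHom)⟩, ?_⟩
  rintro g'' ⟨hφ'', hJ''⟩
  let g''ₐ : B →ₐ[P] R := { g'' with commutes' := fun p ↦ congr($hφ'' p) }
  have : g''ₐ = g' := Algebra.FormallyUnramified.comp_injective J hJ <| by
    rw [hg']
    exact AlgHom.coe_ringHom_injective hJ''
  exact congr(($this).toRingHom)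

section FrobeniusEqualizer

open Algebra.TensorProduct

variable {F A B C : Type*} [Field F] [Fintype F] [CommRing A] [CommRing B] [CommRing C]
  [Algebra F A] [Algebra F B] [Algebra F C] [Algebra A B] [IsScalarTower F A B]
  (h₁ fC : C →ₐ[F] B)

def frobeniusEqualizer : Ideal B :=
  Ideal.span {x | ∃ c : C, x = h₁ c - fC (c ^ Fintype.card F)}

lemma mk_frobeniusEqualizer (c : C) :
    Ideal.Quotient.mk (frobeniusEqualizer h₁ fC) (h₁ c) =
      Ideal.Quotient.mk (frobeniusEqualizer h₁ fC) (fC c) ^ Fintype.card F := by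
  rw [← map_pow, ← map_pow, Ideal.Quotient.mk_eq_mk_iff_sub_mem]
  exact Ideal.subset_span ⟨c, rfl⟩

variable {R : Type*} [CommRing R] [Algebra F R] [Algebra A R] [IsScalarTower F A R]
  {J : Ideal R}

/-- On `C` this is the Frobenius of any lift of `g ∘ f` (it does not depend on the lift); every
lift of `g` to `R` is `C ⊗ A`-linear for this structure. -/
def frobeniusEqualizerStructureMap (hJ : J ^ 2 = ⊥)
    (g : B ⧸ frobeniusEqualizer h₁ fC →ₐ[A] R ⧸ J) : C ⊗[F] A →ₐ[F] R :=
  productMap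
    ((FiniteField.frobeniusQuotientLift F hJ).comp
      (((g.restrictScalars F).comp (Ideal.Quotient.mkₐ F _)).comp fC))
    (IsScalarTower.toAlgHom F A R)

theorem comp_productMap_eq_frobeniusEqualizerStructureMap_iff (hJ : J ^ 2 = ⊥)
    (g : B ⧸ frobeniusEqualizer h₁ fC →ₐ[A] R ⧸ J) {g' : B →+* R}
    (hg' : (Ideal.Quotient.mk J).comp g' = g.toRingHom.comp (Ideal.Quotient.mk _)) :
    g'.comp (productMap h₁ (IsScalarTower.toAlgHom F A B)).toRingHom =
        (frobeniusEqualizerStructureMap h₁ fC hJ g).toRingHom ↔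
      (∀ a, g' (algebraMap A B a) = algebraMap A R a) ∧
        frobeniusEqualizer h₁ fC ≤ RingHom.ker g' := by
  have hΦ (b : B) : FiniteField.frobeniusQuotientLift F hJ (g (Ideal.Quotient.mk _ b)) =
      g' b ^ Fintype.card F := by
    rw [← FiniteField.frobeniusQuotientLift_mk hJ]
    exact congrArg _ congr($hg' b).symm
  have hψ (c : C) (a : A) : frobeniusEqualizerStructureMap h₁ fC hJ g (c ⊗ₜ a) =
      g' (fC c) ^ Fintype.card F * algebraMap A R a := by
    simp [frobeniusEqualizerStructureMap, hΦ]
  constructor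
  · intro h
    have htmul (c : C) (a : A) :
        g' (h₁ c) * g' (algebraMap A B a) = g' (fC c) ^ Fintype.card F * algebraMap A R a := by
      simpa [hψ] using congr($h (c ⊗ₜ a))
    refine ⟨fun a ↦ by simpa using htmul 1 a, ?_⟩
    rw [frobeniusEqualizer, Ideal.span_le]
    rintro _ ⟨c, rfl⟩
    simpa [sub_eq_zero] using htmul c 1
  · rintro ⟨hA, hI⟩
    have hfrob (c : C) : g' (h₁ c) = g' (fC c) ^ Fintype.card F := by
      rw [← map_pow, ← map_pow, ← sub_eq_zero, ← map_sub]
      exact hI (Ideal.subset_span ⟨c, rfl⟩)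
    ext x
    · simp [hψ, hfrob]
    · simp [hψ, hA]

theorem existsUnique_lift_of_frobeniusEqualizer (hJ : J ^ 2 = ⊥)
    (hEt : (productMap h₁ (IsScalarTower.toAlgHom F A B)).toRingHom.FormallyEtale)
    (g : B ⧸ frobeniusEqualizer h₁ fC →ₐ[A] R ⧸ J) :
    ∃! G : B ⧸ frobeniusEqualizer h₁ fC →ₐ[A] R,
      (Ideal.Quotient.mkₐ A J).comp G = g := by
  have hcompat : (g.toRingHom.comp (Ideal.Quotient.mk _)).comp
      (productMap h₁ (IsScalarTower.toAlgHom F A B)).toRingHom =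
        (Ideal.Quotient.mk J).comp (frobeniusEqualizerStructureMap h₁ fC hJ g).toRingHom := by
    ext x
    · simp [frobeniusEqualizerStructureMap, mk_frobeniusEqualizer,
        FiniteField.mk_frobeniusQuotientLift]
    · simp [frobeniusEqualizerStructureMap, Ideal.Quotient.mk_algebraMap]
  obtain ⟨g', ⟨hφ, hg'⟩, huniq⟩ := hEt.existsUnique_lift hJ _ _ hcompat
  obtain ⟨hA, hI⟩ :=
    (comp_productMap_eq_frobeniusEqualizerStructureMap_iff h₁ fC hJ g hg').mp hφ
  refine ⟨Ideal.Quotient.liftₐ _ { g' with commutes' := hA } hI, ?_, fun G hG ↦ ?_⟩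
  · apply Ideal.Quotient.algHom_ext
    ext b
    exact congr($hg' b)
  · have hG' : (Ideal.Quotient.mk J).comp (G.toRingHom.comp (Ideal.Quotient.mk _)) =
        g.toRingHom.comp (Ideal.Quotient.mk _) := by
      rw [← hG]
      rfl
    have hGφ := (comp_productMap_eq_frobeniusEqualizerStructureMap_iff h₁ fC hJ g hG').mpr
      ⟨G.commutes, fun x hx ↦ by simp [Ideal.Quotient.eq_zero_iff_mem.mpr hx]⟩
    apply Ideal.Quotient.algHom_ext
    ext b
    exact congr($(huniq _ ⟨hGφ, hG'⟩) b)

theorem formallyEtale_quotient_frobeniusEqualizer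
    (hEt : (productMap h₁ (IsScalarTower.toAlgHom F A B)).toRingHom.FormallyEtale) :
    Algebra.FormallyEtale A (B ⧸ frobeniusEqualizer h₁ fC) := by
  refine Algebra.FormallyEtale.iff_comp_bijective.mpr fun R _ _ J hJ ↦ ?_
  let _ : Algebra F R := ((algebraMap A R).comp (algebraMap F A)).toAlgebra
  have : IsScalarTower F A R := .of_algebraMap_eq' rfl
  exact (Function.bijective_iff_existsUnique _).mpr
    (existsUnique_lift_of_frobeniusEqualizer h₁ fC hJ hEt)

theorem etale_quotient_frobeniusEqualizer [Algebra.FiniteType F A] [Algebra.FiniteType F B]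
    (hEt : (productMap h₁ (IsScalarTower.toAlgHom F A B)).toRingHom.FormallyEtale) :
    Algebra.Etale A (B ⧸ frobeniusEqualizer h₁ fC) where
  formallyEtale := formallyEtale_quotient_frobeniusEqualizer h₁ fC hEt
  finitePresentation := by
    have := Algebra.FiniteType.isNoetherianRing F A
    exact Algebra.FinitePresentation.of_finiteType.mp (.of_restrictScalars_finiteType F A _)

end FrobeniusEqualizer

theorem stmt_18_general (F : Type) [Field F] [Fintype F]
    (A B C : Type) [CommRing A] [CommRing B] [CommRing C]
    [Algebra F A] [Algebra F B] [Algebra F C]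
    (hA : Algebra.FiniteType F A) (hB : Algebra.FiniteType F B)
    -- `h = (h₁, h₂) : W → Z × T` is étale
    (h₁ : C →ₐ[F] B) (h₂ : A →ₐ[F] B)
    (hEt : @Algebra.Etale (C ⊗[F] A) B _ _
      (RingHom.toAlgebra (Algebra.TensorProduct.productMap h₁ h₂).toRingHom))
    -- `f : W → Z` arbitrary
    (fC : C →ₐ[F] B)
    -- `U ⊆ W` : the equalizer of `h₁` and `Frob_Z ∘ f`, with `q = #F`
    (I : Ideal B) (hI : I = Ideal.span {x | ∃ c : C, x = h₁ c - fC (c ^ Fintype.card F)}) :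
    -- `h₂ : U → T` is étale
    @Algebra.Etale A (B ⧸ I) _ _
      (RingHom.toAlgebra ((Ideal.Quotient.mk I).comp h₂.toRingHom)) := by
  subst hI
  let _ : Algebra A B := h₂.toRingHom.toAlgebra
  have : IsScalarTower F A B := .of_algebraMap_eq fun x ↦ (h₂.commutes x).symm
  exact RingHom.etale_algebraMap.mpr (etale_quotient_frobeniusEqualizer h₁ fC hEt.formallyEtale)

theorem stmt_18 (F : Type) [Field F] [Fintype F]
    (A B C : Type) [CommRing A] [CommRing B] [CommRing C]
    [Algebra F A] [Algebra F B] [Algebra F C]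
    (hA : Algebra.FiniteType F A) (hB : Algebra.FiniteType F B)
    (hC : Algebra.FiniteType F C)
    -- `Z = Spec C` is smooth over `F_q`
    (hCsm : Algebra.Smooth F C)
    -- `h = (h₁, h₂) : W → Z × T` is étale
    (h₁ : C →ₐ[F] B) (h₂ : A →ₐ[F] B)
    (hEt : @Algebra.Etale (C ⊗[F] A) B _ _
      (RingHom.toAlgebra (Algebra.TensorProduct.productMap h₁ h₂).toRingHom))
    -- `f : W → Z` arbitrary
    (fC : C →ₐ[F] B)
    -- `U ⊆ W` : the equalizer of `h₁` and `Frob_Z ∘ f`, with `q = #F`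
    (I : Ideal B) (hI : I = Ideal.span {x | ∃ c : C, x = h₁ c - fC (c ^ Fintype.card F)}) :
    -- `h₂ : U → T` is étale
    @Algebra.Etale A (B ⧸ I) _ _
      (RingHom.toAlgebra ((Ideal.Quotient.mk I).comp h₂.toRingHom)) :=
  stmt_18_general F A B C hA hB h₁ h₂ hEt fC I hI
end
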